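/- Let d ≥ 1, r > 0, a > 0, δ > 0, and let ε > 0 satisfy ε < #S · υ_d · r^d. Let P ⊆ ℝ^d be locally finite and let S ⊆ P be finite and nonempty. Suppose Σ_{x∈S} Σ_{z∈ℤ^d} | #((P ∩ Q_{δ,z} ∩ B̄_r(x)) \ S)/a − vol(Q_{δ,z} ∩ B̄_r(x)) | ≤ ε. Set N := Σ_{x∈S} #((P ∩ B̄_r(x)) \ S). Then N > 0 and Σ_{z∈ℤ^d} | (Σ_{x∈S} #((P ∩ Q_{δ,z} ∩ B̄_r(x)) \ S))/N − (Σ_{x∈S} vol(Q_{δ,z} ∩ B̄_r(x)))/(#S · υ_d · r^d) | ≤ 2ε/(#S · υ_d · r^d). -/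

import Mathlib

open MeasureTheory Metric

/-- The cube `δ z + [-δ/2, δ/2)^d` of the grid `𝒞_δ`. -/
def gridCube (d : ℕ) (δ : ℝ) (z : Fin d → ℤ) : Set (EuclideanSpace ℝ (Fin d)) :=
  {y | ∀ i : Fin d, δ * (z i : ℝ) - δ / 2 ≤ y i ∧ y i < δ * (z i : ℝ) + δ / 2}

/-!
Summing over the cubes of the grid recovers, for each `x ∈ S`, the number of points of
`(P ∩ B̄_r(x)) \ S` and the volume `υ_d r^d` of the ball. Hence the hypothesis also controls
the totals: `|N / a - V| ≤ ε` with `V = #S υ_d r^d`, which forces `N > 0` since `ε < V`.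
With `A`, `B` the total count and volume in one cube,
`A / N - B / V = (A / a - B) / V + A (1 / N - 1 / (a V))`; over all cubes the first part sums
to at most `ε / V` and the second to `|V - N / a| / V ≤ ε / V`.
-/

open scoped ENNReal

section Partition

variable {α β : Type*}

theorem hasSum_ncard_preimage_singleton_inter (f : α → β) {T : Set α} (hT : T.Finite) :
    HasSum (fun b => ((f ⁻¹' {b} ∩ T).ncard : ℝ)) T.ncard := by
  classical
  have hfiber : ∀ b,
      ((f ⁻¹' {b} ∩ T).ncard : ℝ) = ∑ t ∈ hT.toFinset, if b = f t then 1 else 0 := by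
    intro b
    rw [Finset.sum_boole, Set.ncard_eq_toFinset_card _ (hT.subset Set.inter_subset_right)]
    congr 2
    ext t
    simp [eq_comm, and_comm]
  simp only [hfiber]
  rw [Set.ncard_eq_toFinset_card _ hT, Finset.card_eq_sum_ones, Nat.cast_sum, Nat.cast_one]
  exact hasSum_sum fun t _ => hasSum_ite_eq (f t) 1

theorem hasSum_measureReal_preimage_singleton_inter [MeasurableSpace α] [Countable β]
    (μ : Measure α) {f : α → β} (hf : ∀ b, MeasurableSet (f ⁻¹' {b})) {s : Set α}
    (hs : μ s ≠ ∞) : HasSum (fun b => μ.real (f ⁻¹' {b} ∩ s)) (μ.real s) := by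
  have htsum : ∑' b, μ (f ⁻¹' {b} ∩ s) = μ s := by
    have hcover : ⋃ b, f ⁻¹' {b} = Set.univ := by
      simpa using Set.biUnion_preimage_singleton f Set.univ
    simp_rw [← Measure.restrict_apply (hf _)]
    rw [← measure_iUnion (fun b b' hbb' => Disjoint.preimage f (by simpa using hbb')) hf,
      hcover, Measure.restrict_apply_univ]
  have hfin : ∀ b, μ (f ⁻¹' {b} ∩ s) ≠ ∞ :=
    fun b => measure_ne_top_of_subset Set.inter_subset_right hs
  have := ENNReal.hasSum_toReal (htsum.symm ▸ hs)
  rwa [← ENNReal.tsum_toReal_eq hfin, htsum] at this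

end Partition

noncomputable def cubeIndex (d : ℕ) (δ : ℝ) (y : EuclideanSpace ℝ (Fin d)) : Fin d → ℤ :=
  fun i => ⌊y i / δ + 1 / 2⌋

section GridCube

variable {d : ℕ} {δ : ℝ}

theorem mem_gridCube_iff (hδ : 0 < δ) {z : Fin d → ℤ} {y : EuclideanSpace ℝ (Fin d)} :
    y ∈ gridCube d δ z ↔ cubeIndex d δ y = z := by
  simp only [gridCube, cubeIndex, funext_iff, Int.floor_eq_iff]
  refine forall_congr' fun i => and_congr ?_ ?_
  · rw [← sub_le_iff_le_add, le_div_iff₀ hδ]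
    constructor <;> intro <;> linarith
  · rw [← lt_sub_iff_add_lt, div_lt_iff₀ hδ]
    constructor <;> intro <;> linarith

theorem gridCube_eq_preimage (hδ : 0 < δ) (z : Fin d → ℤ) :
    gridCube d δ z = cubeIndex d δ ⁻¹' {z} :=
  Set.ext fun _ => mem_gridCube_iff hδ

theorem measurableSet_gridCube (z : Fin d → ℤ) : MeasurableSet (gridCube d δ z) := by
  have h : gridCube d δ z = ⋂ i, (fun y : EuclideanSpace ℝ (Fin d) => y i) ⁻¹'
      Set.Ico (δ * (z i : ℝ) - δ / 2) (δ * (z i : ℝ) + δ / 2) := by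
    ext y; simp [gridCube]
  rw [h]
  exact .iInter fun i => (PiLp.continuous_apply 2 _ i).measurable measurableSet_Ico

theorem hasSum_ncard_gridCube_inter (hδ : 0 < δ) {T : Set (EuclideanSpace ℝ (Fin d))}
    (hT : T.Finite) : HasSum (fun z => ((gridCube d δ z ∩ T).ncard : ℝ)) T.ncard := by
  simpa only [gridCube_eq_preimage hδ] using hasSum_ncard_preimage_singleton_inter _ hT

theorem hasSum_measureReal_gridCube_inter (hδ : 0 < δ) (μ : Measure (EuclideanSpace ℝ (Fin d)))
    {s : Set (EuclideanSpace ℝ (Fin d))} (hs : μ s ≠ ∞) :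
    HasSum (fun z => μ.real (gridCube d δ z ∩ s)) (μ.real s) := by
  simpa only [gridCube_eq_preimage hδ] using hasSum_measureReal_preimage_singleton_inter μ
    (fun z => gridCube_eq_preimage hδ z ▸ measurableSet_gridCube z) hs

theorem hasSum_ncard_inter_gridCube_inter_sdiff (hδ : 0 < δ)
    {P B S : Set (EuclideanSpace ℝ (Fin d))} (hPB : (P ∩ B).Finite) :
    HasSum (fun z => (((P ∩ gridCube d δ z ∩ B) \ S).ncard : ℝ)) ((P ∩ B) \ S).ncard := by
  have hcell : ∀ z, (P ∩ gridCube d δ z ∩ B) \ S = gridCube d δ z ∩ ((P ∩ B) \ S) := by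
    intro z
    ext y
    simp only [Set.mem_sdiff, Set.mem_inter_iff]
    tauto
  simpa only [hcell] using hasSum_ncard_gridCube_inter hδ (hPB.sdiff (t := S))

theorem hasSum_volume_gridCube_inter_closedBall (hδ : 0 < δ) (x : EuclideanSpace ℝ (Fin d))
    {r : ℝ} (hr : 0 ≤ r) :
    HasSum (fun z => (volume (gridCube d δ z ∩ closedBall x r)).toReal)
      (r ^ d * (volume (closedBall (0 : EuclideanSpace ℝ (Fin d)) 1)).toReal) := by
  have h := hasSum_measureReal_gridCube_inter hδ volume
    (measure_closedBall_lt_top (x := x) (r := r)).ne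
  rwa [measureReal_def, Measure.addHaar_closedBall' _ _ hr, finrank_euclideanSpace_fin,
    ENNReal.toReal_mul, ENNReal.toReal_ofReal (by positivity)] at h

end GridCube

theorem summable_and_tsum_sum_le_of_sum_tsum_ofReal_le {κ ι : Type*} {s : Finset κ}
    {g : κ → ι → ℝ} {ε : ℝ} (hg : ∀ k i, 0 ≤ g k i) (hε : 0 ≤ ε)
    (h : ∑ k ∈ s, ∑' i, ENNReal.ofReal (g k i) ≤ ENNReal.ofReal ε) :
    Summable (fun i => ∑ k ∈ s, g k i) ∧ ∑' i, ∑ k ∈ s, g k i ≤ ε := by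
  have hg' : ∀ i, 0 ≤ ∑ k ∈ s, g k i := fun i => Finset.sum_nonneg fun k _ => hg k i
  rw [← Summable.tsum_finsetSum fun _ _ => ENNReal.summable] at h
  simp only [← ENNReal.ofReal_sum_of_nonneg fun k _ => hg k _] at h
  have hsum : Summable (fun i => ∑ k ∈ s, g k i) := by
    simpa only [ENNReal.toReal_ofReal (hg' _)] using
      ENNReal.summable_toReal (h.trans_lt ENNReal.ofReal_lt_top).ne
  refine ⟨hsum, ?_⟩
  rwa [← ENNReal.ofReal_tsum_of_nonneg hg' hsum, ENNReal.ofReal_le_ofReal_iff hε] at h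

theorem abs_sum_div_sub_sum_le {κ : Type*} {s : Finset κ} (f g : κ → ℝ) (a : ℝ) :
    |(∑ k ∈ s, f k) / a - ∑ k ∈ s, g k| ≤ ∑ k ∈ s, |f k / a - g k| := by
  rw [Finset.sum_div, ← Finset.sum_sub_distrib]
  exact Finset.abs_sum_le_sum_abs _ _

section NormalizedComparison

variable {ι : Type*} {A B E : ι → ℝ} {N V a : ℝ}

theorem abs_div_sub_le_tsum_of_abs_le (hA : HasSum A N) (hB : HasSum B V) (hE : Summable E)
    (hAB : ∀ i, |A i / a - B i| ≤ E i) : |N / a - V| ≤ ∑' i, E i :=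
  ((hA.div_const a).sub hB).norm_le_of_bounded hE.hasSum hAB

theorem pos_of_abs_div_sub_le_tsum (hA : HasSum A N) (hB : HasSum B V) (hE : Summable E)
    (hAB : ∀ i, |A i / a - B i| ≤ E i) (ha : 0 < a) (hEV : ∑' i, E i < V) : 0 < N := by
  have h := abs_le.mp (abs_div_sub_le_tsum_of_abs_le hA hB hE hAB)
  exact (div_pos_iff_of_pos_right ha).mp (by linarith)

theorem tsum_abs_div_sub_div_le (hA0 : ∀ i, 0 ≤ A i) (hA : HasSum A N) (hB : HasSum B V)
    (hE : Summable E) (hAB : ∀ i, |A i / a - B i| ≤ E i) (ha : 0 < a) (hN : 0 < N)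
    (hV : 0 < V) :
    Summable (fun i => |A i / N - B i / V|) ∧
      ∑' i, |A i / N - B i / V| ≤ 2 * (∑' i, E i) / V := by
  set k := |1 / N - 1 / (a * V)|
  have hpt : ∀ i, |A i / N - B i / V| ≤ E i / V + A i * k := by
    intro i
    have heq : A i / N - B i / V = (A i / a - B i) / V + A i * (1 / N - 1 / (a * V)) := by
      field_simp
      ring
    rw [heq]
    refine (abs_add_le _ _).trans (add_le_add ?_ ?_)
    · rw [abs_div, abs_of_pos hV]
      exact div_le_div_of_nonneg_right (hAB i) hV.le
    · rw [abs_mul, abs_of_nonneg (hA0 i)]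
  have hmaj : HasSum (fun i => E i / V + A i * k) ((∑' i, E i) / V + N * k) :=
    (hE.hasSum.div_const V).add (hA.mul_right k)
  have hNk : N * k = |N / a - V| / V := by
    have h : N * (1 / N - 1 / (a * V)) = -(N / a - V) / V := by
      field_simp
      ring
    rw [show N * k = |N * (1 / N - 1 / (a * V))| by rw [abs_mul, abs_of_pos hN], h, abs_div,
      abs_neg, abs_of_pos hV]
  have hsum : Summable (fun i => |A i / N - B i / V|) :=
    .of_nonneg_of_le (fun _ => abs_nonneg _) hpt hmaj.summable
  refine ⟨hsum, ?_⟩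
  calc ∑' i, |A i / N - B i / V| ≤ (∑' i, E i) / V + N * k := hasSum_le hpt hsum.hasSum hmaj
    _ ≤ (∑' i, E i) / V + (∑' i, E i) / V := by
        rw [hNk]
        gcongr
        exact abs_div_sub_le_tsum_of_abs_le hA hB hE hAB
    _ = 2 * (∑' i, E i) / V := by ring

end NormalizedComparison

theorem spatial_kernels_close_general
    (d : ℕ) (r a δ ε : ℝ) (hr : 0 < r) (ha : 0 < a) (hδ : 0 < δ) (hε : 0 < ε)
    (P : Set (EuclideanSpace ℝ (Fin d)))
    (hloc : ∀ K : Set (EuclideanSpace ℝ (Fin d)), Bornology.IsBounded K → (P ∩ K).Finite)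
    (S : Finset (EuclideanSpace ℝ (Fin d)))
    (hεS : ε < (S.card : ℝ) *
        (volume (closedBall (0 : EuclideanSpace ℝ (Fin d)) 1)).toReal * r ^ d)
    (hyp : ∑ x ∈ S, ∑' z : Fin d → ℤ,
        ENNReal.ofReal
          |(((P ∩ gridCube d δ z ∩ closedBall x r) \ ↑S).ncard : ℝ) / a -
            (volume (gridCube d δ z ∩ closedBall x r)).toReal|
      ≤ ENNReal.ofReal ε) :
    0 < ∑ x ∈ S, ((P ∩ closedBall x r) \ ↑S).ncard ∧
    ∑' z : Fin d → ℤ,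
        ENNReal.ofReal
          |(∑ x ∈ S, ((((P ∩ gridCube d δ z ∩ closedBall x r) \ ↑S).ncard : ℝ))) /
              ((∑ x ∈ S, ((P ∩ closedBall x r) \ ↑S).ncard : ℕ) : ℝ) -
            (∑ x ∈ S, (volume (gridCube d δ z ∩ closedBall x r)).toReal) /
              ((S.card : ℝ) *
                (volume (closedBall (0 : EuclideanSpace ℝ (Fin d)) 1)).toReal * r ^ d)|
      ≤ ENNReal.ofReal (2 * ε /
          ((S.card : ℝ) *
            (volume (closedBall (0 : EuclideanSpace ℝ (Fin d)) 1)).toReal * r ^ d)) := by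
  set V := (S.card : ℝ) * (volume (closedBall (0 : EuclideanSpace ℝ (Fin d)) 1)).toReal * r ^ d
  have hN := hasSum_sum fun x (_ : x ∈ S) => hasSum_ncard_inter_gridCube_inter_sdiff (S := ↑S)
    hδ (hloc _ (isBounded_closedBall (x := x) (r := r)))
  have hV :
      HasSum (fun z => ∑ x ∈ S, (volume (gridCube d δ z ∩ closedBall x r)).toReal) V := by
    convert hasSum_sum fun x (_ : x ∈ S) => hasSum_volume_gridCube_inter_closedBall hδ x hr.le
      using 1
    rw [Finset.sum_const, nsmul_eq_mul]
    ring
  obtain ⟨hE, hEε⟩ :=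
    summable_and_tsum_sum_le_of_sum_tsum_ofReal_le (fun _ _ => abs_nonneg _) hε.le hyp
  have hNpos := pos_of_abs_div_sub_le_tsum hN hV hE (fun _ => abs_sum_div_sub_sum_le _ _ a) ha
    (hEε.trans_lt hεS)
  obtain ⟨hsum, hle⟩ := tsum_abs_div_sub_div_le
    (fun _ => Finset.sum_nonneg fun _ _ => Nat.cast_nonneg _) hN hV hE
    (fun _ => abs_sum_div_sub_sum_le _ _ a) ha hNpos (hε.trans hεS)
  refine ⟨by exact_mod_cast hNpos, ?_⟩
  rw [Nat.cast_sum, ← ENNReal.ofReal_tsum_of_nonneg (fun _ => abs_nonneg _) hsum]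
  exact ENNReal.ofReal_le_ofReal (hle.trans (by gcongr))

/-- Total-variation-on-cubes bound between the empirical spatial kernel `K_α(S,·)`
and the limiting spatial kernel `K(S,·)` (core of Lemma 4.4). -/
theorem spatial_kernels_close
    (d : ℕ) (hd : 1 ≤ d) (r a δ ε : ℝ) (hr : 0 < r) (ha : 0 < a) (hδ : 0 < δ) (hε : 0 < ε)
    (P : Set (EuclideanSpace ℝ (Fin d)))
    (hloc : ∀ K : Set (EuclideanSpace ℝ (Fin d)), Bornology.IsBounded K → (P ∩ K).Finite)
    (S : Finset (EuclideanSpace ℝ (Fin d))) (hSP : ↑S ⊆ P) (hSne : S.Nonempty)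
    (hεS : ε < (S.card : ℝ) *
        (volume (closedBall (0 : EuclideanSpace ℝ (Fin d)) 1)).toReal * r ^ d)
    (hyp : ∑ x ∈ S, ∑' z : Fin d → ℤ,
        ENNReal.ofReal
          |(((P ∩ gridCube d δ z ∩ closedBall x r) \ ↑S).ncard : ℝ) / a -
            (volume (gridCube d δ z ∩ closedBall x r)).toReal|
      ≤ ENNReal.ofReal ε) :
    0 < ∑ x ∈ S, ((P ∩ closedBall x r) \ ↑S).ncard ∧
    ∑' z : Fin d → ℤ,
        ENNReal.ofReal
          |(∑ x ∈ S, ((((P ∩ gridCube d δ z ∩ closedBall x r) \ ↑S).ncard : ℝ))) /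
              ((∑ x ∈ S, ((P ∩ closedBall x r) \ ↑S).ncard : ℕ) : ℝ) -
            (∑ x ∈ S, (volume (gridCube d δ z ∩ closedBall x r)).toReal) /
              ((S.card : ℝ) *
                (volume (closedBall (0 : EuclideanSpace ℝ (Fin d)) 1)).toReal * r ^ d)|
      ≤ ENNReal.ofReal (2 * ε /
          ((S.card : ℝ) *
            (volume (closedBall (0 : EuclideanSpace ℝ (Fin d)) 1)).toReal * r ^ d)) :=
  spatial_kernels_close_general d r a δ ε hr ha hδ hε P hloc S hεS hyp
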